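/- Let U ⊂ ℝ^N be open with closure homeomorphic to the closed unit disk, and let φ₀, φ₁ be continuous maps defined on a neighbourhood of closure(U) which are homeomorphisms onto their images. If there exists t > 0 with |φ₀(x) − φ₁(x)| < t for all x ∈ closure(U), then (φ₀(U))_t ⊆ φ₁(U), where (V)_t := {y ∈ V : dist(y, ∂V) > t}. -/

import Mathlib

/-
Since `dist(y, ∂φ₀(U)) > t`, the closed ball `B(y, t)` lies in `φ₀(U)`. With `ψ` the continuous
inverse of `φ₀` on the compact set `closure U`, the map `z ↦ z - φ₁ (ψ z) + y` sends `B(y, t)` into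
itself because `‖φ₀ - φ₁‖ < t`, and Brouwer's theorem gives a fixed point `z`, i.e.
`φ₁ (ψ z) = y` with `ψ z ∈ U`.

Brouwer's theorem is proved analytically. A fixed-point-free self-map of the unit ball becomes,
after composing with the radial retraction and smoothing, a `C¹` map `q` of a slightly larger ball
into its interior without fixed points; following the ray from `q z` through `z` to the sphere
gives a `C¹` retraction `r` of a neighbourhood of the ball onto the sphere. For small `s ≥ 0`,
`z ↦ z + s • (r z - z)` is a diffeomorphism of the ball onto itself, so the integral of
`det (1 + s • (Dr - 1))` over the ball is its volume. This integral is a polynomial in `s`, hence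
equals the volume also at `s = 1`, where the integrand `det Dr` vanishes since `‖r‖` is constant.
-/

noncomputable section

abbrev Euc (d : ℕ) := EuclideanSpace ℝ (Fin d)

/-- `shrinkSet V t = V_t := {y ∈ V : dist(y, ∂V) > t}`. -/
def shrinkSet {N : ℕ} (V : Set (Euc N)) (t : ℝ) : Set (Euc N) :=
  {y ∈ V | t < Metric.infDist y (frontier V)}

open Metric Set Filter Function Topology MeasureTheory Polynomial
open scoped RealInnerProductSpace ContDiff

theorem closedBall_subset_of_lt_infDist_frontier {E : Type*} [NormedAddCommGroup E]
    [NormedSpace ℝ E] {V : Set E} {y : E} {t : ℝ} (hy : y ∈ V)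
    (ht : t < infDist y (frontier V)) : closedBall y t ⊆ V := by
  rcases lt_or_ge t 0 with htneg | htnonneg
  · simp [closedBall_eq_empty.2 htneg]
  have hint : ∀ z ∈ closedBall y t, z ∈ closure V → z ∈ interior V := by
    intro z hz hzc
    by_contra hzi
    have := infDist_le_dist_of_mem (x := y) (show z ∈ frontier V from ⟨hzc, hzi⟩)
    rw [mem_closedBall, dist_comm] at hz
    linarith
  refine ((convex_closedBall y t).isPreconnected.subset_of_closure_inter_subset isOpen_interior
    ⟨y, mem_closedBall_self htnonneg, hint y (mem_closedBall_self htnonneg) (subset_closure hy)⟩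
    fun z hz => hint z hz.2 (closure_mono interior_subset hz.1)).trans interior_subset

theorem IsCompact.exists_continuousOn_leftInvOn {X Y : Type*} [TopologicalSpace X]
    [Nonempty X] [TopologicalSpace Y] [T2Space Y] {f : X → Y} {K : Set X}
    (hK : IsCompact K) (hf : ContinuousOn f K) (hinj : InjOn f K) :
    ∃ g : Y → X, ContinuousOn g (f '' K) ∧ LeftInvOn g f K := by
  refine ⟨Function.invFunOn f K, continuousOn_iff_isClosed.2 fun F hF => ?_,
    hinj.leftInvOn_invFunOn⟩
  refine ⟨f '' (K ∩ F), ((hK.inter_right hF).image_of_continuousOn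
    (hf.mono inter_subset_left)).isClosed, ?_⟩
  ext y
  constructor
  · rintro ⟨hyF, x, hx, rfl⟩
    rw [mem_preimage, hinj.leftInvOn_invFunOn hx] at hyF
    exact ⟨⟨x, ⟨hx, hyF⟩, rfl⟩, x, hx, rfl⟩
  · rintro ⟨⟨x, ⟨hx, hxF⟩, rfl⟩, -⟩
    exact ⟨by rwa [mem_preimage, hinj.leftInvOn_invFunOn hx], x, hx, rfl⟩

theorem image_closedBall_eq_of_eqOn_sphere {E : Type*} [NormedAddCommGroup E]
    [NormedSpace ℝ E] [ProperSpace E] {f : E → E} {c : E} {ρ : ℝ} (hρ : 0 < ρ)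
    (hf : ContinuousOn f (closedBall c ρ)) (hmaps : MapsTo f (closedBall c ρ) (closedBall c ρ))
    (hsphere : EqOn f id (sphere c ρ)) (hopen : ∀ z ∈ ball c ρ, f '' closedBall c ρ ∈ 𝓝 (f z))
    (hc : f c ∈ ball c ρ) : f '' closedBall c ρ = closedBall c ρ := by
  set V := f '' closedBall c ρ
  have hVc : IsClosed V := ((isCompact_closedBall c ρ).image_of_continuousOn hf).isClosed
  have hint : ∀ v ∈ V, v ∈ ball c ρ → v ∈ interior V := by
    rintro _ ⟨z, hz, rfl⟩ hfz
    have hzball : z ∈ ball c ρ := by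
      refine (mem_closedBall.1 hz).lt_of_ne fun hzs => ?_
      rw [hsphere hzs] at hfz
      exact (mem_ball.1 hfz).ne hzs
    exact mem_interior_iff_mem_nhds.2 (hopen z hzball)
  have hball : ball c ρ ⊆ V :=
    ((convex_ball c ρ).isPreconnected.subset_of_closure_inter_subset isOpen_interior
      ⟨f c, hc, hint _ ⟨c, mem_closedBall_self hρ.le, rfl⟩ hc⟩
      fun v hv => hint v (closure_minimal interior_subset hVc hv.1) hv.2).trans interior_subset
  refine (image_subset_iff.2 hmaps).antisymm ?_
  simpa only [closure_ball c hρ.ne'] using closure_minimal hball hVc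

theorem injOn_add_of_lipschitzOnWith {E : Type*} [NormedAddCommGroup E] {s : Set E} {g : E → E}
    {K : NNReal} (hg : LipschitzOnWith K g s) (hK : K < 1) : InjOn (fun x => x + g x) s := by
  intro x hx y hy hxy
  have hxy' : x - y = g y - g x := by
    simp only at hxy
    rw [sub_eq_sub_iff_add_eq_add, hxy, add_comm]
  by_contra hne
  have h := hg.norm_sub_le hy hx
  rw [← hxy', norm_sub_rev] at h
  have hpos : 0 < ‖y - x‖ := norm_pos_iff.2 (sub_ne_zero.2 (Ne.symm hne))
  have : (K : ℝ) < 1 := hK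
  nlinarith

theorem IsCompact.exists_contDiff_dist_lt_of_continuous {E F : Type*} [NormedAddCommGroup E]
    [NormedSpace ℝ E] [FiniteDimensional ℝ E] [NormedAddCommGroup F] [NormedSpace ℝ F]
    [CompleteSpace F] {K : Set E} (hK : IsCompact K) {f : E → F} (hf : Continuous f) {ε : ℝ}
    (hε : 0 < ε) : ∃ g : E → F, ContDiff ℝ ∞ g ∧ ∀ x ∈ K, dist (g x) (f x) < ε := by
  have := ContinuousMap.dense_setOfPred_contDiff (E := E) (F := F) ⟨f, hf⟩
  rw [mem_closure_iff_nhds_basis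
    (nhds_basis_uniformity uniformity_basis_dist.compactConvergenceUniformity)] at this
  obtain ⟨g, hg, hgK⟩ := this (K, ε) ⟨hK, hε⟩
  exact ⟨g, hg, fun x hx => by simpa [dist_comm] using hgK x hx⟩

section RadialRetraction

variable {E : Type*} [NormedAddCommGroup E] [NormedSpace ℝ E]

def radialRetraction (z : E) : E := (max 1 ‖z‖)⁻¹ • z

theorem continuous_radialRetraction : Continuous (radialRetraction : E → E) :=
  ((continuous_const.max continuous_norm).inv₀ fun _ => (lt_max_of_lt_left one_pos).ne').smul
    continuous_id

theorem radialRetraction_mem_closedBall (z : E) : radialRetraction z ∈ closedBall 0 1 := by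
  have hmax : 0 < max 1 ‖z‖ := lt_max_of_lt_left one_pos
  rw [radialRetraction, mem_closedBall_zero_iff, norm_smul, norm_inv,
    Real.norm_of_nonneg hmax.le, inv_mul_le_one₀ hmax]
  exact le_max_right _ _

theorem norm_radialRetraction_sub_le (z : E) : ‖radialRetraction z - z‖ ≤ max 1 ‖z‖ - 1 := by
  have h₁ : (max 1 ‖z‖)⁻¹ ≤ 1 := inv_le_one_of_one_le₀ (le_max_left _ _)
  have h₂ : (max 1 ‖z‖)⁻¹ * max 1 ‖z‖ = 1 := inv_mul_cancel₀ (lt_max_of_lt_left one_pos).ne'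
  have h₃ : ‖z‖ ≤ max 1 ‖z‖ := le_max_right _ _
  rw [radialRetraction, show (max 1 ‖z‖)⁻¹ • z - z = ((max 1 ‖z‖)⁻¹ - 1) • z by
    rw [sub_smul, one_smul], norm_smul, Real.norm_of_nonpos (by linarith)]
  nlinarith

end RadialRetraction

theorem Polynomial.exists_eval_eq_sum_mul_eval {K : Type*} [Field K] {S : Set K}
    (hS : S.Infinite) (n : ℕ) (x : K) :
    ∃ T : Finset K, ↑T ⊆ S ∧ ∃ c : K → K,
      ∀ p : K[X], p.natDegree ≤ n → p.eval x = ∑ t ∈ T, c t * p.eval t := by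
  classical
  obtain ⟨T, hTS, hcard⟩ := hS.exists_subset_card_eq (n + 1)
  refine ⟨T, hTS, fun t => (Lagrange.basis T id t).eval x, fun p hp => ?_⟩
  have hdeg : p.degree < T.card := by
    rw [hcard]
    exact (degree_le_natDegree.trans (WithBot.coe_le_coe.2 hp)).trans_lt
      (WithBot.coe_lt_coe.2 n.lt_succ_self)
  conv_lhs => rw [Lagrange.eq_interpolate (v := id) (injOn_id _) hdeg]
  rw [Lagrange.interpolate_apply, eval_finsetSum]
  simp [mul_comm]

theorem LinearMap.exists_natDegree_le_eval_eq_det_id_add_smul {K M : Type*} [Field K]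
    [AddCommGroup M] [Module K M] [FiniteDimensional K M] (f : M →ₗ[K] M) :
    ∃ p : K[X], p.natDegree ≤ Module.finrank K M ∧
      ∀ s : K, p.eval s = LinearMap.det (LinearMap.id + s • f) := by
  classical
  let b := Module.finBasis K M
  let A := LinearMap.toMatrix b b f
  refine ⟨((X : K[X]) • A.map C + (1 : Matrix _ _ K).map C).det, ?_, fun s => ?_⟩
  · simpa using natDegree_det_X_add_C_le A 1
  · rw [← LinearMap.det_toMatrix b, map_add, LinearMap.toMatrix_id, map_smul,
      ← coe_evalRingHom, RingHom.map_det]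
    congr 1
    ext i j
    simp only [RingHom.mapMatrix_apply, Matrix.map_apply, Matrix.add_apply, Matrix.smul_apply,
      Matrix.one_apply, smul_eq_mul, coe_evalRingHom, eval_add, eval_mul, eval_X, eval_C]
    ring

theorem IsCompact.eventually_forall_det_id_add_smul_pos {E X : Type*} [NormedAddCommGroup E]
    [NormedSpace ℝ E] [TopologicalSpace X] {K : Set X} (hK : IsCompact K) {A : X → E →L[ℝ] E}
    (hA : ∀ z ∈ K, ContinuousAt A z) :
    ∀ᶠ s in 𝓝 (0 : ℝ), ∀ z ∈ K, 0 < (ContinuousLinearMap.id ℝ E + s • A z).det :=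
  hK.eventually_forall_of_forall_eventually fun z hz => continuousAt_const.eventually_lt
    (ContinuousLinearMap.continuous_det.continuousAt.comp
      (continuousAt_const.add (continuousAt_fst.smul ((hA z hz).comp continuousAt_snd))))
    (by simp [ContinuousLinearMap.det])

section FiniteDimensional

variable {E : Type*} [NormedAddCommGroup E] [NormedSpace ℝ E] [FiniteDimensional ℝ E]

theorem integral_det_id_add_smul_eq_of_infinite {X : Type*} [MeasurableSpace X] {μ : Measure X}
    {A : X → E →L[ℝ] E}
    (hA : ∀ s : ℝ, Integrable (fun z => (ContinuousLinearMap.id ℝ E + s • A z).det) μ)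
    {S : Set ℝ} (hS : S.Infinite) {c : ℝ}
    (hc : ∀ s ∈ S, ∫ z, (ContinuousLinearMap.id ℝ E + s • A z).det ∂μ = c) (s : ℝ) :
    ∫ z, (ContinuousLinearMap.id ℝ E + s • A z).det ∂μ = c := by
  obtain ⟨T, hTS, w, hw⟩ := exists_eval_eq_sum_mul_eval hS (Module.finrank ℝ E) s
  have hdet : ∀ z u, (ContinuousLinearMap.id ℝ E + u • A z).det = LinearMap.det
      (LinearMap.id + u • (A z : E →ₗ[ℝ] E)) := fun _ (_ : ℝ) => rfl
  have hinterp : ∀ z, (ContinuousLinearMap.id ℝ E + s • A z).det =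
      ∑ t ∈ T, w t * (ContinuousLinearMap.id ℝ E + t • A z).det := by
    intro z
    obtain ⟨p, hp, hpdet⟩ := (A z : E →ₗ[ℝ] E).exists_natDegree_le_eval_eq_det_id_add_smul
    simp only [hdet, ← hpdet]
    exact hw p hp
  have hw1 : ∑ t ∈ T, w t = 1 := by
    simpa using (hw 1 (by simp)).symm
  calc ∫ z, (ContinuousLinearMap.id ℝ E + s • A z).det ∂μ
      = ∫ z, ∑ t ∈ T, w t * (ContinuousLinearMap.id ℝ E + t • A z).det ∂μ :=
        integral_congr_ae (ae_of_all _ hinterp)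
    _ = ∑ t ∈ T, w t * ∫ z, (ContinuousLinearMap.id ℝ E + t • A z).det ∂μ := by
        rw [integral_finsetSum _ fun t _ => (hA t).const_mul (w t)]
        simp_rw [integral_const_mul]
    _ = ∑ t ∈ T, w t * c := Finset.sum_congr rfl fun t ht => by rw [hc t (hTS ht)]
    _ = c := by rw [← Finset.sum_mul, hw1, one_mul]

theorem setIntegral_det_fderiv_eq_measureReal_image [MeasurableSpace E] [BorelSpace E]
    (μ : Measure E) [μ.IsAddHaarMeasure] {s : Set E} (hs : MeasurableSet s) {f : E → E}
    {f' : E → E →L[ℝ] E} (hf' : ∀ x ∈ s, HasFDerivWithinAt f (f' x) s x) (hf : InjOn f s)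
    (hdet : ∀ x ∈ s, 0 ≤ (f' x).det) :
    ∫ x in s, (f' x).det ∂μ = μ.real (f '' s) := by
  have := integral_image_eq_integral_abs_det_fderiv_smul μ hs hf' hf (fun _ => (1 : ℝ))
  rw [setIntegral_const, smul_eq_mul, mul_one] at this
  rw [this]
  refine setIntegral_congr_fun hs fun x hx => ?_
  simp [abs_of_nonneg (hdet x hx)]

theorem image_add_smul_sub_closedBall_eq {ρ s : ℝ} (hρ : 0 < ρ) (hs₀ : 0 ≤ s) (hs₁ : s < 1)
    {Ω : Set E} (hΩ : IsOpen Ω) (hΩB : closedBall 0 ρ ⊆ Ω) {r : E → E}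
    (hr : ContDiffOn ℝ 1 r Ω) (hr_maps : MapsTo r (closedBall 0 ρ) (closedBall 0 ρ))
    (hr_sphere : EqOn r id (sphere 0 ρ))
    (hdet : ∀ z ∈ ball 0 ρ,
      (ContinuousLinearMap.id ℝ E + s • (fderiv ℝ r z - ContinuousLinearMap.id ℝ E)).det ≠ 0) :
    (fun z => z + s • (r z - z)) '' closedBall 0 ρ = closedBall 0 ρ := by
  have hconvex : ∀ z, z + s • (r z - z) = (1 - s) • z + s • r z := fun z => by module
  refine image_closedBall_eq_of_eqOn_sphere hρ ?_ (fun z hz => ?_) (fun z hz => ?_)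
    (fun z hz => ?_) ?_
  · exact continuousOn_id.add (continuousOn_const.smul ((hr.continuousOn.mono hΩB).sub
      continuousOn_id))
  · rw [hconvex]
    exact convex_closedBall 0 ρ hz (hr_maps hz) (by linarith) hs₀ (by ring)
  · simp [hr_sphere hz]
  · have hzΩ : z ∈ Ω := hΩB (ball_subset_closedBall hz)
    have hr' := (hr.contDiffAt (hΩ.mem_nhds hzΩ)).hasStrictFDerivAt one_ne_zero
    have hF := (hasStrictFDerivAt_id z).add ((hr'.sub (hasStrictFDerivAt_id z)).const_smul s)
    rw [← ContinuousLinearMap.coe_toContinuousLinearEquivOfDetNeZero _ (hdet z hz)] at hF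
    exact hF.map_nhds_eq_of_equiv ▸ Filter.image_mem_map (closedBall_mem_nhds_of_mem hz)
  · rw [hconvex, smul_zero, zero_add, mem_ball_zero_iff, norm_smul, Real.norm_of_nonneg hs₀]
    calc s * ‖r 0‖ ≤ s * ρ := by
          gcongr; exact mem_closedBall_zero_iff.1 (hr_maps (mem_closedBall_self hρ.le))
      _ < ρ := by nlinarith

theorem eventually_setIntegral_det_id_add_smul_eq_measureReal [MeasurableSpace E] [BorelSpace E]
    (μ : Measure E) [μ.IsAddHaarMeasure] {ρ : ℝ} (hρ : 0 < ρ) {Ω : Set E} (hΩ : IsOpen Ω)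
    (hΩB : closedBall 0 ρ ⊆ Ω) {r : E → E} (hr : ContDiffOn ℝ 1 r Ω)
    (hr_maps : MapsTo r (closedBall 0 ρ) (closedBall 0 ρ)) (hr_sphere : EqOn r id (sphere 0 ρ)) :
    ∀ᶠ s in 𝓝[≥] (0 : ℝ), ∫ z in closedBall 0 ρ,
      (ContinuousLinearMap.id ℝ E + s • (fderiv ℝ r z - ContinuousLinearMap.id ℝ E)).det ∂μ =
        μ.real (closedBall 0 ρ) := by
  set A : E → E →L[ℝ] E := fun z => fderiv ℝ r z - ContinuousLinearMap.id ℝ E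
  have hw : ∀ z ∈ Ω, HasFDerivAt (fun z => r z - z) (A z) z := fun z hz =>
    ((hr.contDiffAt (hΩ.mem_nhds hz)).differentiableAt one_ne_zero).hasFDerivAt.sub
      (hasFDerivAt_id z)
  have hAc : ContinuousOn A Ω :=
    (hr.continuousOn_fderiv_of_isOpen hΩ le_rfl).sub continuousOn_const
  obtain ⟨C, hC⟩ := (isCompact_closedBall 0 ρ).exists_bound_of_continuousOn (hAc.mono hΩB)
  have hlip : LipschitzOnWith C.toNNReal (fun z => r z - z) (closedBall 0 ρ) := by
    refine (convex_closedBall 0 ρ).lipschitzOnWith_of_nnnorm_fderiv_le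
      (fun z hz => (hw z (hΩB hz)).differentiableAt) fun z hz => ?_
    rw [(hw z (hΩB hz)).fderiv, ← NNReal.coe_le_coe, coe_nnnorm]
    exact (hC z hz).trans (Real.le_coe_toNNReal C)
  have hsmall : ∀ᶠ s in 𝓝 (0 : ℝ), s < 1 ∧ ‖s‖₊ * C.toNNReal < 1 ∧
      ∀ z ∈ closedBall 0 ρ, 0 < (ContinuousLinearMap.id ℝ E + s • A z).det :=
    (eventually_lt_nhds one_pos).and
      (((continuous_nnnorm.mul continuous_const).continuousAt.eventually_lt continuousAt_const
        (by simp)).and ((isCompact_closedBall 0 ρ).eventually_forall_det_id_add_smul_pos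
          fun z hz => hAc.continuousAt (hΩ.mem_nhds (hΩB hz))))
  filter_upwards [nhdsWithin_le_nhds hsmall, self_mem_nhdsWithin] with s ⟨hs₁, hsC, hdet⟩ hs₀
  have himage := image_add_smul_sub_closedBall_eq hρ hs₀ hs₁ hΩ hΩB hr hr_maps hr_sphere
    fun z hz => (hdet z (ball_subset_closedBall hz)).ne'
  conv_rhs => rw [← himage]
  exact setIntegral_det_fderiv_eq_measureReal_image μ measurableSet_closedBall
    (fun z hz => ((hasFDerivAt_id z).add ((hw z (hΩB hz)).const_smul s)).hasFDerivWithinAt)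
    (injOn_add_of_lipschitzOnWith ((lipschitzWith_smul s).comp_lipschitzOnWith hlip) hsC)
    fun z hz => (hdet z hz).le

end FiniteDimensional

section InnerProductSpace

variable {F : Type*} [NormedAddCommGroup F] [InnerProductSpace ℝ F]

/-- The point where the ray from `a` through `z` meets the sphere of radius `ρ` about `0`
(for `‖a‖ < ρ`, `z ≠ a`): `a + τ • (z - a)` with `τ` the positive root of the quadratic
`‖a + τ • (z - a)‖ ^ 2 = ρ ^ 2`. -/
def sphereHit (ρ : ℝ) (a z : F) : F :=
  a + ((√(⟪a, z - a⟫ ^ 2 + (ρ ^ 2 - ‖a‖ ^ 2) * ‖z - a‖ ^ 2) - ⟪a, z - a⟫) / ‖z - a‖ ^ 2) •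
    (z - a)

theorem norm_sphereHit {ρ : ℝ} {a z : F} (ha : ‖a‖ < ρ) (hz : z ≠ a) :
    ‖sphereHit ρ a z‖ = ρ := by
  unfold sphereHit
  set v := z - a
  have hv : 0 < ‖v‖ ^ 2 := by positivity [sub_ne_zero.2 hz]
  have hD : 0 ≤ ⟪a, v⟫ ^ 2 + (ρ ^ 2 - ‖a‖ ^ 2) * ‖v‖ ^ 2 := by
    have : ‖a‖ ^ 2 < ρ ^ 2 := by gcongr
    positivity
  set τ := (√(⟪a, v⟫ ^ 2 + (ρ ^ 2 - ‖a‖ ^ 2) * ‖v‖ ^ 2) - ⟪a, v⟫) / ‖v‖ ^ 2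
  have hτ : τ * ‖v‖ ^ 2 + ⟪a, v⟫ = √(⟪a, v⟫ ^ 2 + (ρ ^ 2 - ‖a‖ ^ 2) * ‖v‖ ^ 2) := by
    rw [div_mul_cancel₀ _ hv.ne', sub_add_cancel]
  have hquad : (‖a‖ ^ 2 + 2 * τ * ⟪a, v⟫ + τ ^ 2 * ‖v‖ ^ 2 - ρ ^ 2) * ‖v‖ ^ 2 = 0 := by
    linear_combination (congrArg (· ^ 2) hτ).trans (Real.sq_sqrt hD)
  have hsq : ‖a + τ • v‖ ^ 2 = ρ ^ 2 := by
    rw [← real_inner_self_eq_norm_sq, real_inner_add_add_self, real_inner_smul_right,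
      real_inner_smul_left, real_inner_smul_right, real_inner_self_eq_norm_sq,
      real_inner_self_eq_norm_sq]
    linear_combination (mul_eq_zero.1 hquad).resolve_right hv.ne'
  have hρ : 0 ≤ ρ := (norm_nonneg a).trans ha.le
  exact (pow_left_inj₀ (norm_nonneg _) hρ two_ne_zero).1 hsq

theorem sphereHit_eq_self {ρ : ℝ} {a z : F} (ha : ‖a‖ < ρ) (hz : ‖z‖ = ρ) :
    sphereHit ρ a z = z := by
  set v := z - a
  have hv : 0 < ‖v‖ ^ 2 := by
    have : z ≠ a := fun h => by rw [h] at hz; linarith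
    positivity [sub_ne_zero.2 this]
  have hpos : 0 < ‖v‖ ^ 2 + ⟪a, v⟫ := by
    have hz' : ⟪z, v⟫ = ‖v‖ ^ 2 + ⟪a, v⟫ := by
      rw [← real_inner_self_eq_norm_sq, ← inner_add_left, sub_add_cancel]
    have : ⟪z, a⟫ ≤ ‖z‖ * ‖a‖ := real_inner_le_norm z a
    rw [← hz', inner_sub_right, real_inner_self_eq_norm_sq, hz]
    rw [hz] at this
    nlinarith [norm_nonneg a]
  have hρz : ρ ^ 2 = ‖a‖ ^ 2 + 2 * ⟪a, v⟫ + ‖v‖ ^ 2 := by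
    rw [← hz, ← add_sub_cancel a z, ← real_inner_self_eq_norm_sq, real_inner_add_add_self,
      real_inner_self_eq_norm_sq, real_inner_self_eq_norm_sq]
  have hsqrt : √(⟪a, v⟫ ^ 2 + (ρ ^ 2 - ‖a‖ ^ 2) * ‖v‖ ^ 2) = ‖v‖ ^ 2 + ⟪a, v⟫ := by
    rw [Real.sqrt_eq_iff_mul_self_eq_of_pos hpos, hρz]
    ring
  rw [sphereHit, hsqrt, add_sub_cancel_right, div_self hv.ne', one_smul, add_sub_cancel]

theorem ContDiffOn.sphereHit {G : Type*} [NormedAddCommGroup G] [NormedSpace ℝ G]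
    {n : WithTop ℕ∞} {ρ : ℝ} {f g : G → F} {s : Set G} (hf : ContDiffOn ℝ n f s)
    (hg : ContDiffOn ℝ n g s) (hfρ : ∀ x ∈ s, ‖f x‖ < ρ) (hgf : ∀ x ∈ s, g x ≠ f x) :
    ContDiffOn ℝ n (fun x => _root_.sphereHit ρ (f x) (g x)) s := by
  have hv : ContDiffOn ℝ n (fun x => g x - f x) s := hg.sub hf
  have hvpos : ∀ x ∈ s, 0 < ‖g x - f x‖ ^ 2 := fun x hx => by
    positivity [sub_ne_zero.2 (hgf x hx)]
  refine hf.add (ContDiffOn.smul (ContDiffOn.div ?_ (hv.norm_sq (𝕜 := ℝ))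
    fun x hx => (hvpos x hx).ne') hv)
  refine ContDiffOn.sub (ContDiffOn.sqrt ?_ fun x hx => ?_) (hf.inner ℝ hv)
  · exact ((hf.inner ℝ hv).pow 2).add
      ((contDiffOn_const.sub (hf.norm_sq (𝕜 := ℝ))).mul (hv.norm_sq (𝕜 := ℝ)))
  · have : ‖f x‖ ^ 2 < ρ ^ 2 := by gcongr; exact hfρ x hx
    have := hvpos x hx
    positivity

variable [FiniteDimensional ℝ F]

theorem det_fderiv_eq_zero_of_eventually_norm_eq {r : F → F} {z : F} {ρ : ℝ} (hρ : ρ ≠ 0)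
    (hr : DifferentiableAt ℝ r z) (hnorm : ∀ᶠ y in 𝓝 z, ‖r y‖ = ρ) :
    (fderiv ℝ r z).det = 0 := by
  have hderiv : 2 • (innerSL ℝ (r z)).comp (fderiv ℝ r z) = 0 := by
    refine hr.hasFDerivAt.norm_sq.unique ?_
    exact (hasFDerivAt_const (ρ ^ 2) z).congr_of_eventuallyEq
      (hnorm.mono fun y hy => by simp [hy])
  have horth : ∀ u, ⟪r z, fderiv ℝ r z u⟫ = 0 := fun u => by
    simpa using congr($hderiv u)
  by_contra hdet
  obtain ⟨u, hu⟩ := ((fderiv ℝ r z).toContinuousLinearEquivOfDetNeZero hdet).surjective (r z)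
  have := horth u
  rw [ContinuousLinearMap.toContinuousLinearEquivOfDetNeZero_apply] at hu
  rw [hu, real_inner_self_eq_norm_sq, hnorm.self_of_nhds] at this
  exact hρ (pow_eq_zero_iff two_ne_zero |>.1 this)

theorem false_of_contDiffOn_retraction_closedBall_sphere {ρ : ℝ} (hρ : 0 < ρ) {Ω : Set F}
    (hΩ : IsOpen Ω) (hΩB : closedBall 0 ρ ⊆ Ω) {r : F → F} (hr : ContDiffOn ℝ 1 r Ω)
    (hr_norm : ∀ z ∈ Ω, ‖r z‖ = ρ) (hr_sphere : EqOn r id (sphere 0 ρ)) : False := by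
  borelize F
  set μ : Measure F := Measure.addHaar
  set A : F → F →L[ℝ] F := fun z => fderiv ℝ r z - ContinuousLinearMap.id ℝ F
  obtain ⟨σ, hσ, hσvol⟩ := mem_nhdsGE_iff_exists_Ico_subset.1
    (eventually_setIntegral_det_id_add_smul_eq_measureReal μ hρ hΩ hΩB hr
      (fun z hz => mem_closedBall_zero_iff.2 (hr_norm z (hΩB hz)).le) hr_sphere)
  have hint : ∀ s : ℝ, IntegrableOn (fun z => (ContinuousLinearMap.id ℝ F + s • A z).det)
      (closedBall 0 ρ) μ := fun s =>
    (ContinuousLinearMap.continuous_det.comp_continuousOn (continuousOn_const.add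
      (((hr.continuousOn_fderiv_of_isOpen hΩ le_rfl).sub continuousOn_const).const_smul s))
      |>.mono hΩB).integrableOn_compact (isCompact_closedBall 0 ρ)
  have hvol := integral_det_id_add_smul_eq_of_infinite hint ((Ico_infinite hσ).mono hσvol)
    (fun s hs => hs) 1
  have hzero : ∀ z ∈ closedBall 0 ρ, (ContinuousLinearMap.id ℝ F + (1 : ℝ) • A z).det = 0 :=
    fun z hz => by
      rw [one_smul, add_sub_cancel]
      exact det_fderiv_eq_zero_of_eventually_norm_eq hρ.ne'
        ((hr.contDiffAt (hΩ.mem_nhds (hΩB hz))).differentiableAt one_ne_zero)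
        (eventually_of_mem (hΩ.mem_nhds (hΩB hz)) hr_norm)
  rw [setIntegral_congr_fun measurableSet_closedBall hzero, integral_zero] at hvol
  exact (ENNReal.toReal_pos (measure_closedBall_pos μ 0 hρ).ne'
    measure_closedBall_lt_top.ne).ne hvol

theorem exists_isFixedPt_of_contDiff_mapsTo_ball {ρ : ℝ} (hρ : 0 < ρ) {q : F → F}
    (hq : ContDiff ℝ 1 q) (hmaps : MapsTo q (closedBall 0 ρ) (ball 0 ρ)) :
    ∃ z ∈ closedBall 0 ρ, IsFixedPt q z := by
  by_contra! hfix
  set Ω := {z | ‖q z‖ < ρ} ∩ {z | q z ≠ z}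
  have hΩ : IsOpen Ω := (isOpen_lt hq.continuous.norm continuous_const).inter
    (isClosed_eq hq.continuous continuous_id).isOpen_compl
  refine false_of_contDiffOn_retraction_closedBall_sphere hρ hΩ
    (fun z hz => ⟨mem_ball_zero_iff.1 (hmaps hz), hfix z hz⟩)
    (hq.contDiffOn.sphereHit contDiffOn_id (fun z hz => hz.1) fun z hz => Ne.symm hz.2)
    (fun z hz => norm_sphereHit hz.1 (Ne.symm hz.2)) fun z hz => ?_
  exact sphereHit_eq_self (mem_ball_zero_iff.1 (hmaps (sphere_subset_closedBall hz)))
    (mem_sphere_zero_iff_norm.1 hz)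

theorem exists_isFixedPt_of_mapsTo_closedBall_zero_one {f : F → F}
    (hf : ContinuousOn f (closedBall 0 1)) (hmaps : MapsTo f (closedBall 0 1) (closedBall 0 1)) :
    ∃ z ∈ closedBall 0 1, IsFixedPt f z := by
  by_contra! hfix
  obtain ⟨z₀, hz₀, hmin⟩ := (isCompact_closedBall (0 : F) 1).exists_isMinOn
    (nonempty_closedBall.2 zero_le_one) (hf.sub continuousOn_id).norm
  set ε := ‖f z₀ - z₀‖
  have hε : 0 < ε := norm_pos_iff.2 (sub_ne_zero.2 (hfix z₀ hz₀))
  obtain ⟨q, hq, hqf⟩ :=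
    (isCompact_closedBall (0 : F) (1 + ε / 2)).exists_contDiff_dist_lt_of_continuous
    (hf.comp_continuous continuous_radialRetraction radialRetraction_mem_closedBall)
    (by positivity : 0 < ε / 4)
  have hqf' : ∀ z ∈ closedBall 0 (1 + ε / 2), ‖q z - f (radialRetraction z)‖ < ε / 4 :=
    fun z hz => by rw [← dist_eq_norm]; exact hqf z hz
  obtain ⟨z, hz, hqz⟩ := exists_isFixedPt_of_contDiff_mapsTo_ball (by positivity : 0 < 1 + ε / 2)
    (hq.of_le (by simp)) fun z hz => by
      have h₁ := hqf' z hz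
      have h₂ := mem_closedBall_zero_iff.1 (hmaps (radialRetraction_mem_closedBall z))
      have h₃ := norm_le_norm_add_norm_sub' (q z) (f (radialRetraction z))
      rw [mem_ball_zero_iff]
      linarith
  set p := radialRetraction z
  have h₁ : ‖z - f p‖ < ε / 4 := hqz.eq ▸ hqf' z hz
  have h₂ : ε ≤ ‖f p - p‖ := hmin (radialRetraction_mem_closedBall z)
  have h₃ : max 1 ‖z‖ ≤ 1 + ε / 2 := max_le (by linarith) (mem_closedBall_zero_iff.1 hz)
  have h₄ := norm_radialRetraction_sub_le z
  have h₅ := norm_sub_le_norm_sub_add_norm_sub (f p) z p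
  rw [norm_sub_rev (f p) z, norm_sub_rev z p] at h₅
  linarith

theorem exists_isFixedPt_of_mapsTo_closedBall {f : F → F} {c : F} {r : ℝ} (hr : 0 < r)
    (hf : ContinuousOn f (closedBall c r)) (hmaps : MapsTo f (closedBall c r) (closedBall c r)) :
    ∃ z ∈ closedBall c r, IsFixedPt f z := by
  set e : F → F := fun w => c + r • w
  have he : MapsTo e (closedBall 0 1) (closedBall c r) := fun w hw => by
    rw [mem_closedBall, dist_eq_norm, add_sub_cancel_left, norm_smul, Real.norm_of_nonneg hr.le]
    exact mul_le_of_le_one_right hr.le (mem_closedBall_zero_iff.1 hw)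
  have hg : MapsTo (fun w => r⁻¹ • (f (e w) - c)) (closedBall 0 1) (closedBall 0 1) :=
    fun w hw => by
      have := hmaps (he hw)
      rw [mem_closedBall, dist_eq_norm] at this
      rw [mem_closedBall_zero_iff, norm_smul, norm_inv, Real.norm_of_nonneg hr.le,
        inv_mul_le_one₀ hr]
      exact this
  have he_cont : Continuous e := continuous_const.add (continuous_const.smul continuous_id)
  obtain ⟨w, hw, hfix⟩ := exists_isFixedPt_of_mapsTo_closedBall_zero_one
    (f := fun w => r⁻¹ • (f (e w) - c))
    (((hf.comp he_cont.continuousOn he).sub continuousOn_const).const_smul r⁻¹) hg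
  refine ⟨e w, he hw, ?_⟩
  have : f (e w) - c = r • w := by
    conv_rhs => rw [← hfix.eq, smul_inv_smul₀ hr.ne']
  show f (e w) = c + r • w
  rw [← this, add_sub_cancel]

end InnerProductSpace

theorem stmt15_general (N : ℕ) (U : Set (Euc N))
    (hdisk : Nonempty (closure U ≃ₜ Metric.closedBall (0 : Euc N) 1))
    (W : Set (Euc N)) (hUW : closure U ⊆ W)
    (φ₀ φ₁ : Euc N → Euc N)
    (hc₀ : ContinuousOn φ₀ W) (hc₁ : ContinuousOn φ₁ W)
    (hi₀ : Set.InjOn φ₀ W)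
    (t : ℝ) (ht : 0 < t) (hclose : ∀ x ∈ closure U, ‖φ₀ x - φ₁ x‖ < t) :
    shrinkSet (φ₀ '' U) t ⊆ φ₁ '' U := by
  rintro y ⟨hy, hyt⟩
  have hK : IsCompact (closure U) := isCompact_iff_compactSpace.2 hdisk.some.symm.compactSpace
  have hball : closedBall y t ⊆ φ₀ '' U := closedBall_subset_of_lt_infDist_frontier hy hyt
  obtain ⟨ψ, hψ, hψφ⟩ := hK.exists_continuousOn_leftInvOn (hc₀.mono hUW) (hi₀.mono hUW)
  have hψU : ∀ z ∈ closedBall y t, ψ z ∈ U ∧ φ₀ (ψ z) = z := fun z hz => by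
    obtain ⟨x, hx, rfl⟩ := hball hz
    rw [hψφ (subset_closure hx)]
    exact ⟨hx, rfl⟩
  have hφ₁ψ : ContinuousOn (fun z => φ₁ (ψ z)) (closedBall y t) :=
    hc₁.comp (hψ.mono (hball.trans (image_mono subset_closure)))
      fun z hz => hUW (subset_closure (hψU z hz).1)
  obtain ⟨z, hz, hfix⟩ := exists_isFixedPt_of_mapsTo_closedBall (f := fun z => z - φ₁ (ψ z) + y)
    ht ((continuousOn_id.sub hφ₁ψ).add continuousOn_const) fun z hz => by
      rw [mem_closedBall, dist_eq_norm, add_sub_cancel_right]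
      nth_rewrite 1 [← (hψU z hz).2]
      exact (hclose _ (subset_closure (hψU z hz).1)).le
  refine ⟨ψ z, (hψU z hz).1, ?_⟩
  have := hfix.eq
  rwa [sub_add_eq_add_sub, sub_eq_iff_eq_add, add_right_inj, eq_comm] at this

/-- Let `U ⊆ ℝ^N` be open with closure homeomorphic to the closed unit
disk, and let `φ₀, φ₁` be continuous injective maps (homeomorphisms onto their images)
on an open neighbourhood `W` of `closure U`. If `|φ₀(x) − φ₁(x)| < t` on `closure U`,
then `(φ₀(U))_t ⊆ φ₁(U)`. -/
theorem stmt15 (N : ℕ) (U : Set (Euc N)) (hUopen : IsOpen U)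
    (hdisk : Nonempty (closure U ≃ₜ Metric.closedBall (0 : Euc N) 1))
    (W : Set (Euc N)) (hWopen : IsOpen W) (hUW : closure U ⊆ W)
    (φ₀ φ₁ : Euc N → Euc N)
    (hc₀ : ContinuousOn φ₀ W) (hc₁ : ContinuousOn φ₁ W)
    (hi₀ : Set.InjOn φ₀ W) (hi₁ : Set.InjOn φ₁ W)
    (t : ℝ) (ht : 0 < t) (hclose : ∀ x ∈ closure U, ‖φ₀ x - φ₁ x‖ < t) :
    shrinkSet (φ₀ '' U) t ⊆ φ₁ '' U :=
  stmt15_general N U hdisk W hUW φ₀ φ₁ hc₀ hc₁ hi₀ t ht hclose
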